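/- Every simple graph with n vertices and maximum degree 3 has at most 2^{u/4} · C Hamiltonian cycles for some absolute constant C, where u is the number of edges of G not contained in a given set F of edges that every Hamiltonian cycle must contain; in particular, taking F = ∅ and u ≤ 3n/2, the number of Hamiltonian cycles is O(2^{3n/8}). -/

import Mathlib

/-- `IsHamCycleSet G C` : `C` is the edge set of some Hamiltonian cycle of `G`. -/
def IsHamCycleSet {V : Type*} [DecidableEq V] (G : SimpleGraph V) (C : Set (Sym2 V)) : Prop :=
  ∃ (v : V) (p : G.Walk v v), p.IsHamiltonianCycle ∧ C = {e | e ∈ p.edges}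

/-!
Branch and bound on search states `(E, F, X)`: `E` the edges of the graph, `F` the edges forced into
the cycle, `X` the excluded ones, `u` the number of edges still unresolved. We show by induction on
`u` that, once `F ≠ ∅`, at most `ρ ^ u` Hamiltonian cycles respect `(F, X)`, where `ρ = 2 ^ (1/4)`.

Two forcing rules cost nothing: a vertex with only two available edges takes both, and a vertex
with two forced edges loses its third. Afterwards every vertex meeting both a forced and an unforced
edge is a *fork*: one forced edge `f` and two unforced edges `e₁ = vw₁`, `e₂ = vw₂`, exactly one of
which lies on the cycle. Each choice propagates along the forcing rules at `w₁`, `w₂` (and, in one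
case, one vertex further), so that both branches resolve at least four edges, or three and six;
`ρ⁻⁴ + ρ⁻⁴ = 1` and `ρ⁻³ + ρ⁻⁶ < 1` close the induction. If there is no fork, every vertex meets
zero or two forced edges, so `F` is the only candidate cycle. For `F = ∅`, guessing the two cycle
edges at one vertex (at most three ways) gives the constant `3`.
-/

namespace HamCycleCount

open Finset

noncomputable def ρ : ℝ := 2 ^ (4 : ℝ)⁻¹

lemma ρ_pow_four : ρ ^ 4 = 2 := by
  rw [ρ, ← Real.rpow_natCast, ← Real.rpow_mul (by norm_num)]
  norm_num

lemma one_le_ρ : 1 ≤ ρ := Real.one_le_rpow (by norm_num) (by norm_num)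

lemma ρ_nonneg : 0 ≤ ρ := zero_le_one.trans one_le_ρ

lemma ρ_pow_le_pow {m n : ℕ} (h : m ≤ n) : ρ ^ m ≤ ρ ^ n := pow_le_pow_right₀ one_le_ρ h

lemma ρ_pow_eq (k : ℕ) : ρ ^ k = (2 : ℝ) ^ ((k : ℝ) / 4) := by
  rw [ρ, ← Real.rpow_natCast, ← Real.rpow_mul (by norm_num), inv_mul_eq_div]

lemma ρ_pow_sub_add_pow_sub_le_of_four {u d₁ d₂ : ℕ} (h₁ : 4 ≤ d₁) (h₂ : 4 ≤ d₂)
    (h₁u : d₁ ≤ u) (h₂u : d₂ ≤ u) : ρ ^ (u - d₁) + ρ ^ (u - d₂) ≤ ρ ^ u :=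
  calc ρ ^ (u - d₁) + ρ ^ (u - d₂) ≤ ρ ^ (u - 4) + ρ ^ (u - 4) :=
        add_le_add (ρ_pow_le_pow (by omega)) (ρ_pow_le_pow (by omega))
    _ = ρ ^ (u - 4) * ρ ^ 4 := by rw [ρ_pow_four]; ring
    _ = ρ ^ u := by rw [← pow_add]; congr 1; omega

lemma ρ_pow_sub_add_pow_sub_le_of_three_six {u d₁ d₂ : ℕ} (h₁ : 3 ≤ d₁) (h₂ : 6 ≤ d₂)
    (h₁u : d₁ ≤ u) (h₂u : d₂ ≤ u) : ρ ^ (u - d₁) + ρ ^ (u - d₂) ≤ ρ ^ u := by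
  -- `ρ ^ 6 = 2 * ρ ^ 2`, and `2 * t ^ 2 - t ^ 3 - 1 ≥ 0` for `1 ≤ t ≤ 6 / 5`
  have hρ : ρ ^ 3 + 1 ≤ ρ ^ 6 := by
    have h4 := ρ_pow_four
    have h1 := one_le_ρ
    have h65 : ρ ≤ 6 / 5 := by
      by_contra! h
      nlinarith [pow_lt_pow_left₀ h (by norm_num) (by norm_num : (4 : ℕ) ≠ 0)]
    nlinarith [mul_nonneg (sub_nonneg.2 h1) (sub_nonneg.2 h65)]
  calc ρ ^ (u - d₁) + ρ ^ (u - d₂) ≤ ρ ^ (u - 6 + 3) + ρ ^ (u - 6) :=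
        add_le_add (ρ_pow_le_pow (by omega)) (ρ_pow_le_pow (by omega))
    _ = ρ ^ (u - 6) * (ρ ^ 3 + 1) := by ring
    _ ≤ ρ ^ (u - 6) * ρ ^ 6 := mul_le_mul_of_nonneg_left hρ (pow_nonneg ρ_nonneg _)
    _ = ρ ^ u := by rw [← pow_add]; congr 1; omega

/-! ### Search states -/

variable {V : Type*} [DecidableEq V]

def edgesAt (A : Finset (Sym2 V)) (v : V) : Finset (Sym2 V) := {e ∈ A | v ∈ e}

@[simp]
lemma mem_edgesAt {A : Finset (Sym2 V)} {v : V} {e : Sym2 V} : e ∈ edgesAt A v ↔ e ∈ A ∧ v ∈ e :=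
  mem_filter

lemma edgesAt_mono {A B : Finset (Sym2 V)} (h : A ⊆ B) (v : V) : edgesAt A v ⊆ edgesAt B v :=
  filter_subset_filter _ h

lemma card_edgesAt_eq_ncard (A : Finset (Sym2 V)) (x : V) :
    #(edgesAt A x) = {y | s(x, y) ∈ A}.ncard := by
  have : (edgesAt A x : Set (Sym2 V)) = (fun y => s(x, y)) '' {y | s(x, y) ∈ A} := by
    ext e
    simp only [coe_filter, edgesAt, Set.mem_image, Set.mem_ofPred_eq]
    constructor
    · rintro ⟨he, hxe⟩
      obtain ⟨y, rfl⟩ := Sym2.mem_iff_exists.1 hxe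
      exact ⟨y, he, rfl⟩
    · rintro ⟨y, hy, rfl⟩
      exact ⟨hy, Sym2.mem_mk_left _ _⟩
  rw [← Set.ncard_coe_finset, this,
    Set.ncard_image_of_injective _ fun _ _ => Sym2.congr_right.1]

/-- Edge sets of Hamiltonian cycles, combinatorially: minimality among nonempty edge sets with
all degrees even is what makes a 2-regular edge set a single cycle. -/
def IsHamCycleEdges (C : Finset (Sym2 V)) : Prop :=
  (∀ v, #(edgesAt C v) = 2) ∧
    ∀ S ⊆ C, S.Nonempty → (∀ v, #(edgesAt S v) = 0 ∨ #(edgesAt S v) = 2) → S = C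

open Classical in
noncomputable def hamCycles (E F X : Finset (Sym2 V)) : Finset (Finset (Sym2 V)) :=
  {C ∈ E.powerset | IsHamCycleEdges C ∧ F ⊆ C ∧ Disjoint C X}

def availableAt (E X : Finset (Sym2 V)) (v : V) : Finset (Sym2 V) := edgesAt (E \ X) v

def unresolved (E F X : Finset (Sym2 V)) : Finset (Sym2 V) := E \ (F ∪ X)

variable {E F X C C₀ : Finset (Sym2 V)} {v : V}

lemma mem_hamCycles : C ∈ hamCycles E F X ↔ C ⊆ E ∧ IsHamCycleEdges C ∧ F ⊆ C ∧ Disjoint C X := by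
  classical
  simp [hamCycles]

@[simp]
lemma mem_availableAt {e : Sym2 V} : e ∈ availableAt E X v ↔ e ∈ E ∧ e ∉ X ∧ v ∈ e := by
  simp [availableAt, and_assoc]

@[simp]
lemma mem_unresolved {e : Sym2 V} : e ∈ unresolved E F X ↔ e ∈ E ∧ e ∉ F ∧ e ∉ X := by
  simp [unresolved]

lemma IsHamCycleEdges.mem_of_edgesAt_subset_pair (hC : IsHamCycleEdges C) {a b : Sym2 V}
    (h : edgesAt C v ⊆ {a, b}) : a ∈ C ∧ b ∈ C := by
  have hcard : #({a, b} : Finset (Sym2 V)) ≤ #(edgesAt C v) := by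
    rw [hC.1 v]; exact card_le_two
  have heq := eq_of_subset_of_card_le h hcard
  have ha : a ∈ edgesAt C v := heq ▸ mem_insert_self a {b}
  have hb : b ∈ edgesAt C v := heq ▸ mem_insert_of_mem (mem_singleton_self b)
  exact ⟨(mem_edgesAt.1 ha).1, (mem_edgesAt.1 hb).1⟩

lemma edgesAt_subset_availableAt (hC : C ∈ hamCycles E F X) (v : V) :
    edgesAt C v ⊆ availableAt E X v := by
  obtain ⟨hCE, -, -, hCX⟩ := mem_hamCycles.1 hC
  intro e he
  rw [mem_edgesAt] at he
  exact mem_availableAt.2 ⟨hCE he.1, disjoint_left.1 hCX he.1, he.2⟩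

lemma two_le_card_availableAt (hC : C ∈ hamCycles E F X) (v : V) :
    2 ≤ #(availableAt E X v) :=
  (mem_hamCycles.1 hC).2.1.1 v ▸ card_le_card (edgesAt_subset_availableAt hC v)

lemma mem_of_availableAt_subset_triple (hC : C ∈ hamCycles E F X) {a b c : Sym2 V}
    (h : availableAt E X v ⊆ {a, b, c}) (hc : c ∉ C) : a ∈ C ∧ b ∈ C := by
  refine (mem_hamCycles.1 hC).2.1.mem_of_edgesAt_subset_pair (v := v) fun e he => ?_
  have := h (edgesAt_subset_availableAt hC v he)
  have : e ≠ c := by rintro rfl; exact hc (mem_edgesAt.1 he).1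
  grind

lemma notMem_of_two_mem (hC : IsHamCycleEdges C) {a b c : Sym2 V} (ha : a ∈ C) (hb : b ∈ C)
    (hva : v ∈ a) (hvb : v ∈ b) (hvc : v ∈ c) (hab : a ≠ b) (hca : c ≠ a) (hcb : c ≠ b) :
    c ∉ C := by
  intro hc
  have : #({a, b, c} : Finset (Sym2 V)) ≤ #(edgesAt C v) :=
    card_le_card (by intro e he; simp at he; grind [mem_edgesAt])
  rw [hC.1 v, card_eq_three.2 ⟨a, b, c, hab, hca.symm, hcb.symm, rfl⟩] at this
  omega

lemma availableAt_subset_of_card_le_two (hC : C ∈ hamCycles E F X)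
    (h : #(availableAt E X v) ≤ 2) : availableAt E X v ⊆ C := by
  have := eq_of_subset_of_card_le (edgesAt_subset_availableAt hC v)
    (h.trans ((mem_hamCycles.1 hC).2.1.1 v).ge)
  exact fun e he => (mem_edgesAt.1 (this ▸ he)).1

lemma notMem_of_two_le_card_edgesAt (hC : C ∈ hamCycles E F X) (h : 2 ≤ #(edgesAt F v))
    {e : Sym2 V} (hv : v ∈ e) (heF : e ∉ F) : e ∉ C := by
  obtain ⟨-, hHam, hFC, -⟩ := mem_hamCycles.1 hC
  have := eq_of_subset_of_card_le (edgesAt_mono hFC v) ((hHam.1 v).trans_le h)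
  exact fun heC => heF (mem_edgesAt.1 (this ▸ mem_edgesAt.2 ⟨heC, hv⟩)).1

lemma card_hamCycles_le_one (hF : F.Nonempty)
    (heven : ∀ x, #(edgesAt F x) = 0 ∨ #(edgesAt F x) = 2) : #(hamCycles E F X) ≤ 1 := by
  have hCF : ∀ C ∈ hamCycles E F X, F = C := fun C hC => by
    obtain ⟨-, hHam, hFC, -⟩ := mem_hamCycles.1 hC
    exact hHam.2 F hFC hF heven
  exact card_le_one.2 fun C hC C' hC' => (hCF C hC).symm.trans (hCF C' hC')

lemma card_hamCycles_le_one_of_forall (hC₀ : C₀ ∈ hamCycles E F X) (hF : F.Nonempty)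
    (h : ∀ x f e, f ∈ F → x ∈ f → e ∈ availableAt E X x → e ∈ F) : #(hamCycles E F X) ≤ 1 := by
  obtain ⟨hC₀E, hHam₀, hFC₀, hXC₀⟩ := mem_hamCycles.1 hC₀
  refine card_hamCycles_le_one hF fun x => ?_
  rcases (edgesAt F x).eq_empty_or_nonempty with hx | ⟨f, hf⟩
  · exact .inl (card_eq_zero.2 hx)
  -- the forced edges at `x` are all its available edges, hence exactly its two cycle edges
  have hfx := mem_edgesAt.1 hf
  have heq : edgesAt F x = availableAt E X x := Subset.antisymm
    (fun e he => edgesAt_subset_availableAt hC₀ x (edgesAt_mono hFC₀ x he))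
    (fun e he => mem_edgesAt.2 ⟨h x f e hfx.1 hfx.2 he, (mem_availableAt.1 he).2.2⟩)
  have := (card_le_card (edgesAt_mono hFC₀ x)).trans_eq (hHam₀.1 x)
  have := heq ▸ two_le_card_availableAt hC₀ x
  omega

/-! ### Branching -/

lemma mem_hamCycles_union {A B : Finset (Sym2 V)} (hC : C ∈ hamCycles E F X) (hA : A ⊆ C)
    (hB : Disjoint C B) : C ∈ hamCycles E (F ∪ A) (X ∪ B) := by
  obtain ⟨hCE, hHam, hFC, hXC⟩ := mem_hamCycles.1 hC
  exact mem_hamCycles.2 ⟨hCE, hHam, union_subset hFC hA, disjoint_union_right.2 ⟨hXC, hB⟩⟩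

lemma card_hamCycles_le_of_forall {A B : Finset (Sym2 V)}
    (h : ∀ C ∈ hamCycles E F X, A ⊆ C ∧ Disjoint C B) :
    #(hamCycles E F X) ≤ #(hamCycles E (F ∪ A) (X ∪ B)) :=
  card_le_card fun C hC => mem_hamCycles_union hC (h C hC).1 (h C hC).2

lemma card_hamCycles_le_add {A₁ B₁ A₂ B₂ : Finset (Sym2 V)}
    (h : ∀ C ∈ hamCycles E F X, (A₁ ⊆ C ∧ Disjoint C B₁) ∨ (A₂ ⊆ C ∧ Disjoint C B₂)) :
    #(hamCycles E F X) ≤ #(hamCycles E (F ∪ A₁) (X ∪ B₁)) + #(hamCycles E (F ∪ A₂) (X ∪ B₂)) := by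
  refine (card_le_card fun C hC => ?_).trans (card_union_le _ _)
  rw [mem_union]
  exact (h C hC).imp (fun h => mem_hamCycles_union hC h.1 h.2)
    fun h => mem_hamCycles_union hC h.1 h.2

def CountBoundBelow (E : Finset (Sym2 V)) (n : ℕ) : Prop :=
  ∀ F X : Finset (Sym2 V), F.Nonempty → #(unresolved E F X) < n →
    (#(hamCycles E F X) : ℝ) ≤ ρ ^ #(unresolved E F X)

lemma card_hamCycles_union_le (IH : CountBoundBelow E #(unresolved E F X)) (hF : F.Nonempty)
    {A B D : Finset (Sym2 V)} (hD : D ⊆ unresolved E F X) (hDne : D.Nonempty) (hDAB : D ⊆ A ∪ B) :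
    (#(hamCycles E (F ∪ A) (X ∪ B)) : ℝ) ≤ ρ ^ (#(unresolved E F X) - #D) := by
  have hsub : unresolved E (F ∪ A) (X ∪ B) ⊆ unresolved E F X \ D := by
    intro e he
    simp only [mem_unresolved, mem_union, not_or, mem_sdiff] at he ⊢
    exact ⟨⟨he.1, he.2.1.1, he.2.2.1⟩, fun heD => by grind⟩
  have hcard := (card_le_card hsub).trans_eq (card_sdiff_of_subset hD)
  have hpos := hDne.card_pos
  have hlt : #D ≤ #(unresolved E F X) := card_le_card hD
  exact (IH _ _ (hF.mono subset_union_left) (by omega)).trans (ρ_pow_le_pow hcard)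

lemma card_hamCycles_le_of_branch (IH : CountBoundBelow E #(unresolved E F X)) (hF : F.Nonempty)
    {A₁ B₁ A₂ B₂ D₁ D₂ : Finset (Sym2 V)}
    (h : ∀ C ∈ hamCycles E F X, (A₁ ⊆ C ∧ Disjoint C B₁) ∨ (A₂ ⊆ C ∧ Disjoint C B₂))
    (hD₁ : D₁ ⊆ unresolved E F X) (hD₁AB : D₁ ⊆ A₁ ∪ B₁) (hD₁ne : D₁.Nonempty)
    (hD₂ : D₂ ⊆ unresolved E F X) (hD₂AB : D₂ ⊆ A₂ ∪ B₂) (hD₂ne : D₂.Nonempty)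
    (hρ : ρ ^ (#(unresolved E F X) - #D₁) + ρ ^ (#(unresolved E F X) - #D₂) ≤
      ρ ^ #(unresolved E F X)) :
    (#(hamCycles E F X) : ℝ) ≤ ρ ^ #(unresolved E F X) :=
  calc (#(hamCycles E F X) : ℝ)
      ≤ #(hamCycles E (F ∪ A₁) (X ∪ B₁)) + #(hamCycles E (F ∪ A₂) (X ∪ B₂)) := by
        exact_mod_cast card_hamCycles_le_add h
    _ ≤ _ := add_le_add (card_hamCycles_union_le IH hF hD₁ hD₁ne hD₁AB)
        (card_hamCycles_union_le IH hF hD₂ hD₂ne hD₂AB)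
    _ ≤ _ := hρ

lemma card_hamCycles_le_of_branch_four (IH : CountBoundBelow E #(unresolved E F X))
    (hF : F.Nonempty) {A₁ B₁ A₂ B₂ D₁ D₂ : Finset (Sym2 V)}
    (h : ∀ C ∈ hamCycles E F X, (A₁ ⊆ C ∧ Disjoint C B₁) ∨ (A₂ ⊆ C ∧ Disjoint C B₂))
    (hD₁ : D₁ ⊆ unresolved E F X) (hD₁AB : D₁ ⊆ A₁ ∪ B₁) (hD₁card : 4 ≤ #D₁)
    (hD₂ : D₂ ⊆ unresolved E F X) (hD₂AB : D₂ ⊆ A₂ ∪ B₂) (hD₂card : 4 ≤ #D₂) :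
    (#(hamCycles E F X) : ℝ) ≤ ρ ^ #(unresolved E F X) :=
  card_hamCycles_le_of_branch IH hF h hD₁ hD₁AB (card_pos.1 (by omega)) hD₂ hD₂AB
    (card_pos.1 (by omega)) (ρ_pow_sub_add_pow_sub_le_of_four hD₁card hD₂card
      (card_le_card hD₁) (card_le_card hD₂))

lemma card_hamCycles_le_of_branch_three_six (IH : CountBoundBelow E #(unresolved E F X))
    (hF : F.Nonempty) {A₁ B₁ A₂ B₂ D₁ D₂ : Finset (Sym2 V)}
    (h : ∀ C ∈ hamCycles E F X, (A₁ ⊆ C ∧ Disjoint C B₁) ∨ (A₂ ⊆ C ∧ Disjoint C B₂))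
    (hD₁ : D₁ ⊆ unresolved E F X) (hD₁AB : D₁ ⊆ A₁ ∪ B₁) (hD₁card : 3 ≤ #D₁)
    (hD₂ : D₂ ⊆ unresolved E F X) (hD₂AB : D₂ ⊆ A₂ ∪ B₂) (hD₂card : 6 ≤ #D₂) :
    (#(hamCycles E F X) : ℝ) ≤ ρ ^ #(unresolved E F X) :=
  card_hamCycles_le_of_branch IH hF h hD₁ hD₁AB (card_pos.1 (by omega)) hD₂ hD₂AB
    (card_pos.1 (by omega)) (ρ_pow_sub_add_pow_sub_le_of_three_six hD₁card hD₂card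
      (card_le_card hD₁) (card_le_card hD₂))

lemma card_hamCycles_le_of_resolve (IH : CountBoundBelow E #(unresolved E F X)) (hF : F.Nonempty)
    {A B D : Finset (Sym2 V)} (h : ∀ C ∈ hamCycles E F X, A ⊆ C ∧ Disjoint C B)
    (hD : D ⊆ unresolved E F X) (hDne : D.Nonempty) (hDAB : D ⊆ A ∪ B) :
    (#(hamCycles E F X) : ℝ) ≤ ρ ^ #(unresolved E F X) :=
  calc (#(hamCycles E F X) : ℝ) ≤ #(hamCycles E (F ∪ A) (X ∪ B)) := by
        exact_mod_cast card_hamCycles_le_of_forall h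
    _ ≤ _ := card_hamCycles_union_le IH hF hD hDne hDAB
    _ ≤ _ := ρ_pow_le_pow (Nat.sub_le _ _)

lemma mem_unresolved_of_mem_availableAt {e : Sym2 V} (he : e ∈ availableAt E X v) (heF : e ∉ F) :
    e ∈ unresolved E F X := by
  simp only [mem_availableAt] at he
  exact mem_unresolved.2 ⟨he.1, heF, he.2.1⟩

/-! ### Forks -/

lemma exists_eq_insert_pair_of_card_eq_three {α : Type*} [DecidableEq α] {s : Finset α} {a : α}
    (ha : a ∈ s) (h : #s = 3) : ∃ p q, p ≠ q ∧ a ≠ p ∧ a ≠ q ∧ s = {a, p, q} := by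
  obtain ⟨p, q, hpq, hpq'⟩ := card_eq_two.1 (show #(s.erase a) = 2 by rw [card_erase_of_mem ha, h])
  refine ⟨p, q, hpq, ?_, ?_, ?_⟩
  · rintro rfl; simpa using (hpq' ▸ mem_insert_self a {q} : a ∈ s.erase a)
  · rintro rfl; simpa using (hpq' ▸ mem_insert_of_mem (mem_singleton_self a) : a ∈ s.erase a)
  · rw [← insert_erase ha, hpq']

structure IsAvailTriple (E X : Finset (Sym2 V)) (x : V) (a b c : Sym2 V) : Prop where
  eq : availableAt E X x = {a, b, c}
  ne_ab : a ≠ b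
  ne_ac : a ≠ c
  ne_bc : b ≠ c

namespace IsAvailTriple

variable {x : V} {a b c : Sym2 V}

lemma swap_ab (h : IsAvailTriple E X x a b c) : IsAvailTriple E X x b a c :=
  ⟨h.eq.trans (insert_comm _ _ _), h.ne_ab.symm, h.ne_bc, h.ne_ac⟩

lemma swap_bc (h : IsAvailTriple E X x a b c) : IsAvailTriple E X x a c b :=
  ⟨h.eq.trans (by rw [pair_comm]), h.ne_ac, h.ne_ab, h.ne_bc.symm⟩

lemma a_mem (h : IsAvailTriple E X x a b c) : a ∈ availableAt E X x := h.eq ▸ by simp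

lemma b_mem (h : IsAvailTriple E X x a b c) : b ∈ availableAt E X x := h.eq ▸ by simp

lemma c_mem (h : IsAvailTriple E X x a b c) : c ∈ availableAt E X x := h.eq ▸ by simp

lemma vertex_mem_a (h : IsAvailTriple E X x a b c) : x ∈ a := (mem_availableAt.1 h.a_mem).2.2

lemma vertex_mem_b (h : IsAvailTriple E X x a b c) : x ∈ b := (mem_availableAt.1 h.b_mem).2.2

lemma vertex_mem_c (h : IsAvailTriple E X x a b c) : x ∈ c := (mem_availableAt.1 h.c_mem).2.2

lemma eq_or_eq_or_eq (h : IsAvailTriple E X x a b c) {e : Sym2 V} (he : e ∈ availableAt E X x) :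
    e = a ∨ e = b ∨ e = c := by
  simpa [h.eq] using he

lemma notMem_of_ne (h : IsAvailTriple E X x a b c) (ha : a ∈ F) {y : V} {e : Sym2 V}
    (he : e ∈ availableAt E X y) (heF : e ∉ F) (heb : e ≠ b) (hec : e ≠ c) : x ∉ e := by
  intro hx
  simp only [mem_availableAt] at he
  rcases h.eq_or_eq_or_eq (mem_availableAt.2 ⟨he.1, he.2.1, hx⟩) with rfl | rfl | rfl <;>
    contradiction

lemma mem_iff_notMem (h : IsAvailTriple E X x a b c) (ha : a ∈ F) (hC : C ∈ hamCycles E F X) :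
    b ∈ C ↔ c ∉ C := by
  obtain ⟨-, hHam, hFC, -⟩ := mem_hamCycles.1 hC
  have hx := fun e (he : e ∈ availableAt E X x) => (mem_availableAt.1 he).2.2
  refine ⟨fun hb hc => notMem_of_two_mem hHam (hFC ha) hb (hx _ h.a_mem) (hx _ h.b_mem)
    (hx _ h.c_mem) h.ne_ab h.ne_ac.symm h.ne_bc.symm hc, fun hc => ?_⟩
  exact (mem_of_availableAt_subset_triple (a := a) hC h.eq.le hc).2

lemma mem_of_notMem (h : IsAvailTriple E X x a b c) (hC : C ∈ hamCycles E F X) (ha : a ∉ C) :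
    b ∈ C ∧ c ∈ C :=
  mem_of_availableAt_subset_triple hC (h.eq.le.trans (by simp [subset_iff])) ha

end IsAvailTriple

/-- Neither forcing rule applies: no vertex with an unforced available edge has only two available
edges or two forced edges. -/
def IsReduced (E F X : Finset (Sym2 V)) : Prop :=
  ∀ x e, e ∈ availableAt E X x → e ∉ F → #(availableAt E X x) = 3 ∧ #(edgesAt F x) ≤ 1

/-- In a reduced state the far end of an unforced edge `e` is *free* (no forced edge) or *forced*
(exactly one forced edge `g`). -/
lemma IsReduced.exists_isAvailTriple (hred : IsReduced E F X) {x : V} {e : Sym2 V}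
    (he : e ∈ availableAt E X x) (heF : e ∉ F) :
    (∃ p q, IsAvailTriple E X x e p q ∧ p ∉ F ∧ q ∉ F) ∨
      ∃ g h, IsAvailTriple E X x g e h ∧ g ∈ F ∧ h ∉ F := by
  obtain ⟨h3, h1⟩ := hred x e he heF
  obtain ⟨p, q, hpq, hep, heq, hav⟩ := exists_eq_insert_pair_of_card_eq_three he h3
  have ht : IsAvailTriple E X x e p q := ⟨hav, hep, heq, hpq⟩
  have hFx : ∀ g ∈ ({p, q} : Finset (Sym2 V)), g ∈ F → g ∈ edgesAt F x := fun g hg hgF =>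
    mem_edgesAt.2 ⟨hgF, (mem_availableAt.1 (hav ▸ mem_insert_of_mem hg)).2.2⟩
  by_cases hp : p ∈ F <;> by_cases hq : q ∈ F
  · have := card_le_card (show {p, q} ⊆ edgesAt F x by grind)
    rw [card_pair hpq] at this
    omega
  · exact .inr ⟨p, q, ht.swap_ab, hp, hq⟩
  · exact .inr ⟨q, p, ht.swap_bc.swap_ab, hq, hp⟩
  · exact .inl ⟨p, q, ht, hp, hq⟩

lemma card_hamCycles_le_of_alternating (IH : CountBoundBelow E #(unresolved E F X))
    (hF : F.Nonempty) {a b c d : Sym2 V} (hD : ({a, b, c, d} : Finset (Sym2 V)) ⊆ unresolved E F X)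
    (hcard : #({a, b, c, d} : Finset (Sym2 V)) = 4) (hab : ∀ C ∈ hamCycles E F X, a ∈ C ↔ b ∉ C)
    (hbc : ∀ C ∈ hamCycles E F X, b ∈ C ↔ c ∉ C) (hcd : ∀ C ∈ hamCycles E F X, c ∈ C ↔ d ∉ C) :
    (#(hamCycles E F X) : ℝ) ≤ ρ ^ #(unresolved E F X) := by
  refine card_hamCycles_le_of_branch_four (A₁ := {a, c}) (B₁ := {b, d}) (A₂ := {b, d})
    (B₂ := {a, c}) IH hF (fun C hC => ?_) hD (by grind) hcard.ge hD (by grind) hcard.ge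
  have := hab C hC; have := hbc C hC; have := hcd C hC
  by_cases ha : a ∈ C
  · left; simp only [insert_subset_iff, singleton_subset_iff, disjoint_insert_right,
      disjoint_singleton_right]; tauto
  · right; simp only [insert_subset_iff, singleton_subset_iff, disjoint_insert_right,
      disjoint_singleton_right]; tauto

structure IsFork (E F X : Finset (Sym2 V)) (v w₁ w₂ : V) (f e₁ e₂ : Sym2 V) : Prop where
  triple : IsAvailTriple E X v f e₁ e₂
  forced : f ∈ F
  not_forced₁ : e₁ ∉ F
  not_forced₂ : e₂ ∉ F
  eq₁ : e₁ = s(v, w₁)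
  eq₂ : e₂ = s(v, w₂)
  ne₁ : w₁ ≠ v
  ne₂ : w₂ ≠ v

namespace IsFork

variable {v w₁ w₂ : V} {f e₁ e₂ : Sym2 V}

lemma symm (h : IsFork E F X v w₁ w₂ f e₁ e₂) : IsFork E F X v w₂ w₁ f e₂ e₁ :=
  ⟨h.triple.swap_bc, h.forced, h.not_forced₂, h.not_forced₁, h.eq₂, h.eq₁, h.ne₂, h.ne₁⟩

lemma notMem₁ (h : IsFork E F X v w₁ w₂ f e₁ e₂) : w₂ ∉ e₁ := by
  have := h.triple.ne_bc
  rw [h.eq₁, Sym2.mem_iff]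
  rintro (h' | h')
  · exact h.ne₂ h'
  · exact this (by rw [h.eq₁, h.eq₂, h'])

lemma notMem₂ (h : IsFork E F X v w₁ w₂ f e₁ e₂) : w₁ ∉ e₂ := h.symm.notMem₁

lemma mem_unresolved₁ (h : IsFork E F X v w₁ w₂ f e₁ e₂) : e₁ ∈ unresolved E F X :=
  mem_unresolved_of_mem_availableAt h.triple.b_mem h.not_forced₁

lemma mem_unresolved₂ (h : IsFork E F X v w₁ w₂ f e₁ e₂) : e₂ ∈ unresolved E F X :=
  mem_unresolved_of_mem_availableAt h.triple.c_mem h.not_forced₂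

lemma notMem_of_mem_availableAt₁ (h : IsFork E F X v w₁ w₂ f e₁ e₂) {e : Sym2 V}
    (he : e ∈ availableAt E X w₁) (heF : e ∉ F) (he₁ : e ≠ e₁) : v ∉ e :=
  h.triple.notMem_of_ne h.forced he heF he₁
    fun he₂ => h.notMem₂ (he₂ ▸ (mem_availableAt.1 he).2.2)

end IsFork

variable {v w₁ w₂ : V} {f e₁ e₂ : Sym2 V}

lemma IsReduced.exists_isFork (hred : IsReduced E F X) (hE : ∀ e ∈ E, ¬ e.IsDiag)
    {f e : Sym2 V} (hf : f ∈ availableAt E X v) (hfF : f ∈ F) (he : e ∈ availableAt E X v)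
    (heF : e ∉ F) : ∃ w₁ w₂ f e₁ e₂, IsFork E F X v w₁ w₂ f e₁ e₂ := by
  rcases hred.exists_isAvailTriple he heF with ⟨p, q, hv, hp, hq⟩ | ⟨g, h, hv, hg, hh⟩
  · rcases hv.eq_or_eq_or_eq hf with rfl | rfl | rfl <;> contradiction
  obtain ⟨w₁, he₁⟩ := Sym2.mem_iff_exists.1 hv.vertex_mem_b
  obtain ⟨w₂, he₂⟩ := Sym2.mem_iff_exists.1 hv.vertex_mem_c
  have hne : ∀ {w e'}, e' ∈ availableAt E X v → e' = s(v, w) → w ≠ v := fun he' hw h =>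
    hE _ (mem_availableAt.1 he').1 (by rw [hw, h, Sym2.mk_isDiag_iff])
  exact ⟨w₁, w₂, g, e, h, hv, hg, heF, hh, he₁, he₂, hne hv.b_mem he₁, hne hv.c_mem he₂⟩

lemma card_hamCycles_le_of_free_free (IH : CountBoundBelow E #(unresolved E F X))
    (hF : F.Nonempty) {p₁ q₁ p₂ q₂ : Sym2 V} (hv : IsFork E F X v w₁ w₂ f e₁ e₂)
    (hw₁ : IsAvailTriple E X w₁ e₁ p₁ q₁) (hp₁ : p₁ ∉ F) (hq₁ : q₁ ∉ F)
    (hw₂ : IsAvailTriple E X w₂ e₂ p₂ q₂) (hp₂ : p₂ ∉ F) (hq₂ : q₂ ∉ F) :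
    (#(hamCycles E F X) : ℝ) ≤ ρ ^ #(unresolved E F X) := by
  -- incidences and memberships from which `grind` derives the side conditions of the branching
  have := hv.notMem_of_mem_availableAt₁ hw₁.b_mem hp₁ hw₁.ne_ab.symm
  have := hv.notMem_of_mem_availableAt₁ hw₁.c_mem hq₁ hw₁.ne_ac.symm
  have := hv.symm.notMem_of_mem_availableAt₁ hw₂.b_mem hp₂ hw₂.ne_ab.symm
  have := hv.symm.notMem_of_mem_availableAt₁ hw₂.c_mem hq₂ hw₂.ne_ac.symm
  have := hv.triple.vertex_mem_b; have := hv.triple.vertex_mem_c; have := hv.triple.ne_bc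
  have := hw₁.ne_bc; have := hw₂.ne_ab; have := hw₂.ne_ac; have := hw₂.ne_bc
  have := hv.mem_unresolved₁; have := hv.mem_unresolved₂
  have := mem_unresolved_of_mem_availableAt hw₁.b_mem hp₁
  have := mem_unresolved_of_mem_availableAt hw₁.c_mem hq₁
  have := mem_unresolved_of_mem_availableAt hw₂.b_mem hp₂
  have := mem_unresolved_of_mem_availableAt hw₂.c_mem hq₂
  refine card_hamCycles_le_of_branch_four (A₁ := {e₁, p₂, q₂}) (B₁ := {e₂}) (A₂ := {e₂, p₁, q₁})
    (B₂ := {e₁}) (D₁ := {e₁, e₂, p₂, q₂}) (D₂ := {e₁, e₂, p₁, q₁}) IH hF (fun C hC => ?_)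
    (by grind) (by grind) (by grind) (by grind) (by grind) (by grind)
  have hv := hv.triple.mem_iff_notMem hv.forced hC
  by_cases h₁ : e₁ ∈ C
  · have := hw₂.mem_of_notMem hC (hv.1 h₁)
    left; simp only [insert_subset_iff, singleton_subset_iff, disjoint_singleton_right]; tauto
  · have := hw₁.mem_of_notMem hC h₁
    right; simp only [insert_subset_iff, singleton_subset_iff, disjoint_singleton_right]; tauto

lemma card_hamCycles_le_of_forced_forced (IH : CountBoundBelow E #(unresolved E F X))
    (hF : F.Nonempty) {g₁ h₁ g₂ h₂ : Sym2 V} (hv : IsFork E F X v w₁ w₂ f e₁ e₂)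
    (hw₁ : IsAvailTriple E X w₁ g₁ e₁ h₁) (hg₁ : g₁ ∈ F) (hh₁ : h₁ ∉ F)
    (hw₂ : IsAvailTriple E X w₂ g₂ e₂ h₂) (hg₂ : g₂ ∈ F) (hh₂ : h₂ ∉ F) :
    (#(hamCycles E F X) : ℝ) ≤ ρ ^ #(unresolved E F X) := by
  have hr₁ := fun C (hC : C ∈ hamCycles E F X) => hw₁.mem_iff_notMem hg₁ hC
  have hr₂ := fun C (hC : C ∈ hamCycles E F X) => hw₂.mem_iff_notMem hg₂ hC
  have hrv := fun C (hC : C ∈ hamCycles E F X) => hv.triple.mem_iff_notMem hv.forced hC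
  by_cases hh : h₁ = h₂
  · have : hamCycles E F X = ∅ := by
      refine eq_empty_of_forall_notMem fun C hC => ?_
      have := hr₁ C hC; have := hr₂ C hC; have := hrv C hC
      subst hh; tauto
    simp [this, pow_nonneg ρ_nonneg]
  have := hw₁.vertex_mem_c; have := hw₂.vertex_mem_c; have := hv.notMem₁; have := hv.notMem₂
  have := hv.triple.ne_bc; have := hw₁.ne_bc; have := hw₂.ne_bc
  have := hv.mem_unresolved₁; have := hv.mem_unresolved₂
  have := mem_unresolved_of_mem_availableAt hw₁.c_mem hh₁
  have := mem_unresolved_of_mem_availableAt hw₂.c_mem hh₂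
  refine card_hamCycles_le_of_alternating (a := h₁) (b := e₁) (c := e₂) (d := h₂) IH hF (by grind)
    (by grind) (fun C hC => ?_) hrv hr₂
  have := hr₁ C hC; tauto

lemma card_hamCycles_le_of_free_forced_free (IH : CountBoundBelow E #(unresolved E F X))
    (hF : F.Nonempty) {p₁ q₁ g₂ h₂ r₁ r₂ : Sym2 V} {z : V} (hv : IsFork E F X v w₁ w₂ f e₁ e₂)
    (hw₁ : IsAvailTriple E X w₁ e₁ p₁ q₁) (hp₁ : p₁ ∉ F) (hq₁ : q₁ ∉ F)
    (hw₂ : IsAvailTriple E X w₂ g₂ e₂ h₂) (hg₂ : g₂ ∈ F) (hh₂ : h₂ ∉ F)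
    (hz : IsAvailTriple E X z h₂ r₁ r₂) (hr₁ : r₁ ∉ F) (hr₂ : r₂ ∉ F)
    (hze₁ : z ∉ e₁) (hze₂ : z ∉ e₂) (hw₁h₂ : w₁ ∉ h₂) :
    (#(hamCycles E F X) : ℝ) ≤ ρ ^ #(unresolved E F X) := by
  have := hv.notMem_of_mem_availableAt₁ hw₁.b_mem hp₁ hw₁.ne_ab.symm
  have := hv.notMem_of_mem_availableAt₁ hw₁.c_mem hq₁ hw₁.ne_ac.symm
  have hzw₁ : z ≠ w₁ := fun h => hze₁ (h ▸ hw₁.vertex_mem_a)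
  have huniq : ∀ e, w₁ ∈ e → z ∈ e → e = s(w₁, z) := fun e h₁ h₂ =>
    (Sym2.mem_and_mem_iff (Ne.symm hzw₁)).1 ⟨h₁, h₂⟩
  have := hw₁.vertex_mem_b; have := hw₁.vertex_mem_c; have := hz.vertex_mem_b
  have := hz.vertex_mem_c; have := hw₂.vertex_mem_c; have := hv.notMem₁; have := hv.notMem₂
  have := hv.triple.ne_bc; have := hw₁.ne_ab; have := hw₁.ne_ac; have := hw₁.ne_bc
  have := hw₂.ne_bc; have := hz.ne_ab; have := hz.ne_ac; have := hz.ne_bc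
  obtain ⟨r, hr, hrp₁, hrq₁⟩ : ∃ r, (r = r₁ ∨ r = r₂) ∧ r ≠ p₁ ∧ r ≠ q₁ := by
    by_cases h : r₁ ≠ p₁ ∧ r₁ ≠ q₁
    · exact ⟨r₁, .inl rfl, h⟩
    · refine ⟨r₂, .inr rfl, ?_⟩
      grind
  have : r ∈ unresolved E F X := by
    rcases hr with rfl | rfl
    exacts [mem_unresolved_of_mem_availableAt hz.b_mem hr₁,
      mem_unresolved_of_mem_availableAt hz.c_mem hr₂]
  have := hv.mem_unresolved₁; have := hv.mem_unresolved₂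
  have := mem_unresolved_of_mem_availableAt hw₁.b_mem hp₁
  have := mem_unresolved_of_mem_availableAt hw₁.c_mem hq₁
  have := mem_unresolved_of_mem_availableAt hw₂.c_mem hh₂
  have := mem_unresolved_of_mem_availableAt hz.b_mem hr₁
  have := mem_unresolved_of_mem_availableAt hz.c_mem hr₂
  refine card_hamCycles_le_of_branch_three_six (A₁ := {e₁, h₂}) (B₁ := {e₂})
    (A₂ := {e₂, p₁, q₁, r₁, r₂}) (B₂ := {e₁, h₂}) (D₁ := {e₁, e₂, h₂})
    (D₂ := {e₁, e₂, h₂, p₁, q₁, r}) IH hF (fun C hC => ?_)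
    (by grind) (by grind) (by grind) (by grind) (by grind) (by grind)
  have := hv.triple.mem_iff_notMem hv.forced hC
  have := hw₂.mem_iff_notMem hg₂ hC
  by_cases h₁ : e₁ ∈ C
  · left; simp only [insert_subset_iff, singleton_subset_iff, disjoint_singleton_right]; tauto
  · have := hw₁.mem_of_notMem hC h₁
    have := hz.mem_of_notMem hC (by tauto)
    right; simp only [insert_subset_iff, singleton_subset_iff, disjoint_insert_right,
      disjoint_singleton_right]; tauto

lemma card_hamCycles_le_of_free_forced (IH : CountBoundBelow E #(unresolved E F X))
    (hF : F.Nonempty) (hE : ∀ e ∈ E, ¬ e.IsDiag) (hred : IsReduced E F X)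
    {p₁ q₁ g₂ h₂ : Sym2 V} (hv : IsFork E F X v w₁ w₂ f e₁ e₂)
    (hw₁ : IsAvailTriple E X w₁ e₁ p₁ q₁) (hp₁ : p₁ ∉ F) (hq₁ : q₁ ∉ F)
    (hw₂ : IsAvailTriple E X w₂ g₂ e₂ h₂) (hg₂ : g₂ ∈ F) (hh₂ : h₂ ∉ F) :
    (#(hamCycles E F X) : ℝ) ≤ ρ ^ #(unresolved E F X) := by
  obtain ⟨z, hh₂z⟩ := Sym2.mem_iff_exists.1 hw₂.vertex_mem_c
  have hh₂E := (mem_availableAt.1 hw₂.c_mem).1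
  have hvh₂ := hv.symm.notMem_of_mem_availableAt₁ hw₂.c_mem hh₂ hw₂.ne_bc.symm
  have hzv : z ≠ v := by rintro rfl; exact hvh₂ (hh₂z ▸ Sym2.mem_mk_right _ _)
  have hh₂z' : h₂ ∈ availableAt E X z :=
    mem_availableAt.2 ⟨hh₂E, (mem_availableAt.1 hw₂.c_mem).2.1, hh₂z ▸ Sym2.mem_mk_right _ _⟩
  have hrv := fun C (hC : C ∈ hamCycles E F X) => hv.triple.mem_iff_notMem hv.forced hC
  have hr₂ := fun C (hC : C ∈ hamCycles E F X) => hw₂.mem_iff_notMem hg₂ hC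
  by_cases hzw₁ : z = w₁
  · -- `h₂` joins `w₂` to `w₁`, so dropping `e₁` would force `h₂` both in and out of the cycle.
    subst hzw₁
    clear hh₂z
    have hh₂pq : h₂ = p₁ ∨ h₂ = q₁ := by
      have := hw₁.eq_or_eq_or_eq hh₂z'
      have : h₂ ≠ e₁ := fun h => hv.notMem₁ (h ▸ hw₂.vertex_mem_c)
      tauto
    refine card_hamCycles_le_of_resolve (A := {e₁}) (B := {e₂}) (D := {e₁}) IH hF
      (fun C hC => ?_) (by simpa using hv.mem_unresolved₁) (singleton_nonempty _) (by simp)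
    have := hrv C hC; have := hr₂ C hC
    by_cases h₁ : e₁ ∈ C
    · simp only [singleton_subset_iff, disjoint_singleton_right]; tauto
    · have := hw₁.mem_of_notMem hC h₁
      grind
  have hzw₂ : z ≠ w₂ := fun h => hE h₂ hh₂E (by rw [hh₂z, h, Sym2.mk_isDiag_iff])
  have hze₁ : z ∉ e₁ := by rw [hv.eq₁, Sym2.mem_iff]; tauto
  have hze₂ : z ∉ e₂ := by rw [hv.eq₂, Sym2.mem_iff]; tauto
  have hw₁h₂ : w₁ ∉ h₂ := by
    rw [hh₂z, Sym2.mem_iff]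
    exact not_or.2 ⟨fun h => hv.notMem₂ (h ▸ hw₂.vertex_mem_b), Ne.symm hzw₁⟩
  clear hh₂z
  rcases hred.exists_isAvailTriple hh₂z' hh₂ with ⟨r₁, r₂, hz, hr₁, hr₂⟩ | ⟨g₃, h₃, hz, hg₃, hh₃⟩
  · exact card_hamCycles_le_of_free_forced_free IH hF hv hw₁ hp₁ hq₁ hw₂ hg₂ hh₂ hz hr₁ hr₂
      hze₁ hze₂ hw₁h₂
  have := hz.vertex_mem_c; have := hw₂.vertex_mem_c; have := hv.notMem₁
  have := hv.triple.ne_bc; have := hw₂.ne_bc; have := hz.ne_bc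
  have := hv.mem_unresolved₁; have := hv.mem_unresolved₂
  have := mem_unresolved_of_mem_availableAt hw₂.c_mem hh₂
  have := mem_unresolved_of_mem_availableAt hz.c_mem hh₃
  exact card_hamCycles_le_of_alternating (a := e₁) (b := e₂) (c := h₂) (d := h₃) IH hF (by grind)
    (by grind) hrv hr₂ fun C hC => hz.mem_iff_notMem hg₃ hC

lemma card_hamCycles_le_of_isFork (IH : CountBoundBelow E #(unresolved E F X))
    (hF : F.Nonempty)
    (hE : ∀ e ∈ E, ¬ e.IsDiag) (hred : IsReduced E F X) (hv : IsFork E F X v w₁ w₂ f e₁ e₂) :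
    (#(hamCycles E F X) : ℝ) ≤ ρ ^ #(unresolved E F X) := by
  have he₁ : e₁ ∈ availableAt E X w₁ := by
    have := mem_availableAt.1 hv.triple.b_mem
    exact mem_availableAt.2 ⟨this.1, this.2.1, hv.eq₁ ▸ Sym2.mem_mk_right _ _⟩
  have he₂ : e₂ ∈ availableAt E X w₂ := by
    have := mem_availableAt.1 hv.triple.c_mem
    exact mem_availableAt.2 ⟨this.1, this.2.1, hv.eq₂ ▸ Sym2.mem_mk_right _ _⟩
  rcases hred.exists_isAvailTriple he₁ hv.not_forced₁ with
    ⟨p₁, q₁, hw₁, hp₁, hq₁⟩ | ⟨g₁, h₁, hw₁, hg₁, hh₁⟩ <;>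
  rcases hred.exists_isAvailTriple he₂ hv.not_forced₂ with
    ⟨p₂, q₂, hw₂, hp₂, hq₂⟩ | ⟨g₂, h₂, hw₂, hg₂, hh₂⟩
  · exact card_hamCycles_le_of_free_free IH hF hv hw₁ hp₁ hq₁ hw₂ hp₂ hq₂
  · exact card_hamCycles_le_of_free_forced IH hF hE hred hv hw₁ hp₁ hq₁ hw₂ hg₂ hh₂
  · exact card_hamCycles_le_of_free_forced IH hF hE hred hv.symm hw₂ hp₂ hq₂ hw₁ hg₁ hh₁
  · exact card_hamCycles_le_of_forced_forced IH hF hv hw₁ hg₁ hh₁ hw₂ hg₂ hh₂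

lemma card_hamCycles_le_of_countBoundBelow (hE : ∀ e ∈ E, ¬ e.IsDiag)
    (hdeg : ∀ x, #(edgesAt E x) ≤ 3) (hF : F.Nonempty)
    (IH : CountBoundBelow E #(unresolved E F X)) :
    (#(hamCycles E F X) : ℝ) ≤ ρ ^ #(unresolved E F X) := by
  rcases (hamCycles E F X).eq_empty_or_nonempty with h | ⟨C₀, hC₀⟩
  · simp [h, pow_nonneg ρ_nonneg]
  by_cases h₁ : ∃ x e, #(availableAt E X x) ≤ 2 ∧ e ∈ availableAt E X x ∧ e ∉ F
  · obtain ⟨x, e, hx, he, heF⟩ := h₁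
    exact card_hamCycles_le_of_resolve (B := ∅) IH hF
      (fun C hC => ⟨availableAt_subset_of_card_le_two hC hx, disjoint_empty_right _⟩)
      (singleton_subset_iff.2 (mem_unresolved_of_mem_availableAt he heF))
      (singleton_nonempty e) (by simpa using he)
  by_cases h₂ : ∃ x e, 2 ≤ #(edgesAt F x) ∧ e ∈ availableAt E X x ∧ e ∉ F
  · obtain ⟨x, e, hx, he, heF⟩ := h₂
    exact card_hamCycles_le_of_resolve (A := ∅) (B := {e}) IH hF
      (fun C hC => ⟨empty_subset _, disjoint_singleton_right.2
        (notMem_of_two_le_card_edgesAt hC hx (mem_availableAt.1 he).2.2 heF)⟩)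
      (singleton_subset_iff.2 (mem_unresolved_of_mem_availableAt he heF))
      (singleton_nonempty e) (by simp)
  push Not at h₁ h₂
  have hred : IsReduced E F X := fun x e he heF => by
    have h3 : ¬ #(availableAt E X x) ≤ 2 := fun h => heF (h₁ x e h he)
    have h1 : ¬ 2 ≤ #(edgesAt F x) := fun h => heF (h₂ x e h he)
    have : #(availableAt E X x) ≤ #(edgesAt E x) := card_le_card (edgesAt_mono sdiff_subset x)
    have := hdeg x
    exact ⟨by omega, by omega⟩
  by_cases hfork : ∃ x f e, f ∈ F ∧ x ∈ f ∧ e ∈ availableAt E X x ∧ e ∉ F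
  · obtain ⟨x, f, e, hf, hx, he, heF⟩ := hfork
    obtain ⟨hC₀E, -, hFC₀, hXC₀⟩ := mem_hamCycles.1 hC₀
    have hfx : f ∈ availableAt E X x :=
      mem_availableAt.2 ⟨hC₀E (hFC₀ hf), disjoint_left.1 hXC₀ (hFC₀ hf), hx⟩
    obtain ⟨w₁, w₂, f, e₁, e₂, hv⟩ := hred.exists_isFork hE hfx hf he heF
    exact card_hamCycles_le_of_isFork IH hF hE hred hv
  push Not at hfork
  calc (#(hamCycles E F X) : ℝ) ≤ 1 := mod_cast card_hamCycles_le_one_of_forall hC₀ hF hfork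
    _ ≤ _ := one_le_pow₀ one_le_ρ

theorem card_hamCycles_le (hE : ∀ e ∈ E, ¬ e.IsDiag) (hdeg : ∀ x, #(edgesAt E x) ≤ 3)
    (hF : F.Nonempty) : (#(hamCycles E F X) : ℝ) ≤ ρ ^ #(unresolved E F X) := by
  suffices ∀ n, CountBoundBelow E n from this _ F X hF (Nat.lt_succ_self _)
  intro n
  induction n with
  | zero => exact fun _ _ _ h => absurd h (Nat.not_lt_zero _)
  | succ n ih =>
    intro F X hF hlt
    rcases Nat.lt_succ_iff_lt_or_eq.1 hlt with hlt | heq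
    · exact ih F X hF hlt
    · exact card_hamCycles_le_of_countBoundBelow hE hdeg hF (heq ▸ ih)

theorem card_hamCycles_le_three_mul (hE : ∀ e ∈ E, ¬ e.IsDiag)
    (hdeg : ∀ x, #(edgesAt E x) ≤ 3) (F X : Finset (Sym2 V)) (x : V) :
    (#(hamCycles E F X) : ℝ) ≤ 3 * ρ ^ #(unresolved E F X) := by
  -- split according to the two edges of the cycle at `x`
  have hsub : hamCycles E F X ⊆
      (powersetCard 2 (edgesAt E x)).biUnion fun P => hamCycles E (F ∪ P) X := by
    intro C hC
    obtain ⟨hCE, hHam, hFC, hXC⟩ := mem_hamCycles.1 hC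
    exact mem_biUnion.2 ⟨edgesAt C x, mem_powersetCard.2 ⟨edgesAt_mono hCE x, hHam.1 x⟩,
      mem_hamCycles.2 ⟨hCE, hHam, union_subset hFC (filter_subset _ _), hXC⟩⟩
  have hbranch : ∀ P ∈ powersetCard 2 (edgesAt E x),
      (#(hamCycles E (F ∪ P) X) : ℝ) ≤ ρ ^ #(unresolved E F X) := fun P hP => by
    have hPne : P.Nonempty := card_pos.1 ((mem_powersetCard.1 hP).2 ▸ two_pos)
    refine (card_hamCycles_le hE hdeg (hPne.mono subset_union_right)).trans (ρ_pow_le_pow ?_)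
    exact card_le_card fun e => by simp only [mem_unresolved, mem_union]; tauto
  have hchoose : #(powersetCard 2 (edgesAt E x)) ≤ 3 := by
    rw [card_powersetCard]
    exact (Nat.choose_le_choose 2 (hdeg x)).trans_eq rfl
  calc (#(hamCycles E F X) : ℝ)
      ≤ ∑ P ∈ powersetCard 2 (edgesAt E x), (#(hamCycles E (F ∪ P) X) : ℝ) := by
        exact_mod_cast (card_le_card hsub).trans card_biUnion_le
    _ ≤ #(powersetCard 2 (edgesAt E x)) * ρ ^ #(unresolved E F X) := by
        simpa using sum_le_sum hbranch
    _ ≤ 3 * ρ ^ #(unresolved E F X) := by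
        gcongr
        · exact pow_nonneg ρ_nonneg _
        · exact_mod_cast hchoose

end HamCycleCount

/-! ### Hamiltonian cycles of a graph -/

namespace SimpleGraph.Walk

open HamCycleCount Finset

variable {V : Type*} [DecidableEq V] {G : SimpleGraph V} {u : V}

lemma IsCycle.card_edgesAt_eq_two {p : G.Walk u u} (hp : p.IsCycle) {x : V}
    (hx : x ∈ p.support) : #(edgesAt p.edges.toFinset x) = 2 := by
  rw [card_edgesAt_eq_ncard, ← hp.ncard_neighborSet_toSubgraph_eq_two hx]
  congr 1
  ext y
  rw [Set.mem_ofPred_eq, List.mem_toFinset, ← p.mem_edges_toSubgraph, Subgraph.mem_edgeSet]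
  rfl

lemma IsHamiltonianCycle.isHamCycleEdges {p : G.Walk u u} (hp : p.IsHamiltonianCycle) :
    IsHamCycleEdges p.edges.toFinset := by
  set C := p.edges.toFinset
  have hdeg : ∀ x, #(edgesAt C x) = 2 := fun x =>
    hp.isCycle.card_edgesAt_eq_two (hp.mem_support x)
  refine ⟨hdeg, fun S hSC hS heven => ?_⟩
  -- once `S` meets a vertex it contains both cycle edges there, so it spreads along the cycle
  have hfull : ∀ x, (∃ e ∈ S, x ∈ e) → edgesAt C x ⊆ S := by
    rintro x ⟨e, heS, hxe⟩
    have hSx : #(edgesAt S x) = 2 := (heven x).resolve_left fun h =>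
      notMem_empty e (card_eq_zero.1 h ▸ mem_edgesAt.2 ⟨heS, hxe⟩)
    have := eq_of_subset_of_card_le (edgesAt_mono hSC x) (by rw [hSx, hdeg x])
    exact fun e' he' => (mem_edgesAt.1 (this ▸ he')).1
  have hspread : ∀ {a b} (q : G.Walk a b), (∀ e ∈ q.edges, e ∈ C) →
      (∃ e ∈ S, a ∈ e) → ∃ e ∈ S, b ∈ e := by
    intro a b q
    induction q with
    | nil => exact fun _ h => h
    | @cons a b c hab q ih =>
      intro hq ha
      refine ih (fun e he => hq e (List.mem_cons_of_mem _ he)) ⟨s(a, b), ?_, Sym2.mem_mk_right _ _⟩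
      exact hfull a ha (mem_edgesAt.2 ⟨hq _ List.mem_cons_self, Sym2.mem_mk_left _ _⟩)
  obtain ⟨e₀, he₀⟩ := hS
  have hmeets : ∀ y, ∃ e ∈ S, y ∈ e := fun y => by
    have hx₀ : e₀.out.1 ∈ p.support := hp.mem_support _
    have hu : ∃ e ∈ S, u ∈ e := hspread (p.dropUntil _ hx₀)
      (fun e he => List.mem_toFinset.2 (p.edges_dropUntil_subset_edges hx₀ he))
      ⟨e₀, he₀, Sym2.out_fst_mem e₀⟩
    exact hspread (p.takeUntil y (hp.mem_support y))
      (fun e he => List.mem_toFinset.2 (p.edges_takeUntil_subset_edges _ he)) hu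
  exact Subset.antisymm hSC fun e he =>
    hfull _ (hmeets e.out.1) (mem_edgesAt.2 ⟨he, Sym2.out_fst_mem e⟩)

end SimpleGraph.Walk

namespace HamCycleCount

open Finset

variable {V : Type*} [Fintype V] [DecidableEq V]

lemma ncard_setOf_isHamCycleSet_le_card_hamCycles (G : SimpleGraph V) (F : Set (Sym2 V)) :
    {C | IsHamCycleSet G C ∧ F ⊆ C}.ncard ≤
      #(hamCycles G.edgeSet.toFinite.toFinset F.toFinite.toFinset ∅) := by
  rw [← Set.ncard_coe_finset]
  refine Set.ncard_le_ncard_of_injOn (fun C => C.toFinite.toFinset) ?_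
    (fun C _ C' _ h => Set.Finite.toFinset_inj.1 h) (finite_toSet _)
  rintro _ ⟨⟨v, p, hp, rfl⟩, hFC⟩
  have : (Set.toFinite {e | e ∈ p.edges}).toFinset = p.edges.toFinset := by ext; simp
  rw [mem_coe, this, mem_hamCycles]
  refine ⟨fun e he => ?_, hp.isHamCycleEdges, fun e he => ?_, disjoint_empty_right _⟩
  · simpa using p.edges_subset_edgeSet (List.mem_toFinset.1 he)
  · simpa using hFC (by simpa using he)

theorem ncard_setOf_isHamCycleSet_le (G : SimpleGraph V) (F : Set (Sym2 V))
    (hdeg : ∀ v, (G.neighborSet v).ncard ≤ 3) :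
    ({C | IsHamCycleSet G C ∧ F ⊆ C}.ncard : ℝ) ≤ 3 * ρ ^ (G.edgeSet \ F).ncard := by
  rcases isEmpty_or_nonempty V with hV | ⟨⟨x⟩⟩
  · simp [IsHamCycleSet, pow_nonneg ρ_nonneg]
  set E := G.edgeSet.toFinite.toFinset
  have hE : ∀ e ∈ E, ¬ e.IsDiag := fun e he => G.not_isDiag_of_mem_edgeSet (by simpa [E] using he)
  have hdegE : ∀ x, #(edgesAt E x) ≤ 3 := fun x => by
    rw [card_edgesAt_eq_ncard]
    exact (congrArg Set.ncard (by ext; simp [E])).trans_le (hdeg x)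
  have hu : #(unresolved E F.toFinite.toFinset ∅) = (G.edgeSet \ F).ncard := by
    rw [← Set.ncard_coe_finset]
    congr 1
    ext e
    simp [E]
  calc ({C | IsHamCycleSet G C ∧ F ⊆ C}.ncard : ℝ)
      ≤ #(hamCycles E F.toFinite.toFinset ∅) := by
        exact_mod_cast ncard_setOf_isHamCycleSet_le_card_hamCycles G F
    _ ≤ 3 * ρ ^ (G.edgeSet \ F).ncard := hu ▸ card_hamCycles_le_three_mul hE hdegE _ _ x

end HamCycleCount

/-- There is an absolute constant `c` such that for every simple graph `G` of maximum degree 3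
and every set `F` of forced edges of `G`, the number of Hamiltonian cycles of `G` containing
all edges of `F` is at most `2^(u/4) · c`, where `u = |E(G) \ F|`. -/
theorem stmt_12 :
    ∃ c : ℝ, ∀ (n : ℕ) (G : SimpleGraph (Fin n)) (F : Set (Sym2 (Fin n))),
      F ⊆ G.edgeSet →
      (∀ v, (G.neighborSet v).ncard ≤ 3) →
      ({C : Set (Sym2 (Fin n)) | IsHamCycleSet G C ∧ F ⊆ C}.ncard : ℝ)
        ≤ 2 ^ (((G.edgeSet \ F).ncard : ℝ) / 4) * c := by
  refine ⟨3, fun n G F _ hdeg => ?_⟩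
  rw [mul_comm, ← HamCycleCount.ρ_pow_eq]
  exact HamCycleCount.ncard_setOf_isHamCycleSet_le G F hdeg
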